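/- arXiv:1702.02710 — 2 statements merged into one kernel-verified Lean document; each statement's English description precedes it below -/
import Mathlib

section
/- Let M be a topological space and 𝒢 a topological group acting continuously on M with identity element e. If g ∈ 𝒢 lies in the same path component of 𝒢 as e, then the space P_g M is homotopy equivalent to P_e M, and hence to the free loop space LM of M. (Proposition 3.1, after Lupercio–Uribe–Xicoténcatl.) -/
/-!
Pointwise multiplication by a path `γ` from `1` to `g`, `σ ↦ (t ↦ γ t • σ t)`, is a
homeomorphism `P_1 M ≃ₜ P_g M`, with inverse multiplication by `(γ t)⁻¹`. The quotient map
`[0,1] → ℝ/ℤ` is proper, so precomposition with it identifies `C(ℝ/ℤ, M)`, as a topological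
space, with the paths taking equal values at the endpoints, i.e. with `P_1 M`.
Homeomorphisms are in particular homotopy equivalences.
-/

open Function Topology

/-- `P_g M`: the space of continuous paths `σ : [0,1] → M` with `σ(1) = g • σ(0)`,
topologized as a subspace of `C([0,1], M)` with the compact-open topology.
For `g = 1` this is canonically homeomorphic to the free loop space `LM`. -/
abbrev PSp (𝒢 : Type) [Monoid 𝒢] [TopologicalSpace 𝒢] (M : Type) [TopologicalSpace M]
    [MulAction 𝒢 M] (g : 𝒢) : Type :=
  {σ : C(unitInterval, M) // σ 1 = g • σ 0}

namespace ContinuousMap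

variable {X 𝒢 M : Type*} [TopologicalSpace X] [LocallyCompactSpace X] [Group 𝒢]
  [TopologicalSpace 𝒢] [ContinuousInv 𝒢] [TopologicalSpace M] [MulAction 𝒢 M]
  [ContinuousSMul 𝒢 M]

noncomputable def pointwiseSMulHomeomorph (γ : C(X, 𝒢)) : C(X, M) ≃ₜ C(X, M) where
  toFun σ := ⟨fun x ↦ γ x • σ x, γ.continuous.smul σ.continuous⟩
  invFun σ := ⟨fun x ↦ (γ x)⁻¹ • σ x, γ.continuous.inv.smul σ.continuous⟩
  left_inv σ := by ext; simp
  right_inv σ := by ext; simp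
  continuous_toFun := continuous_of_continuous_uncurry _ <|
    (γ.continuous.comp continuous_snd).smul continuous_eval
  continuous_invFun := continuous_of_continuous_uncurry _ <|
    (γ.continuous.comp continuous_snd).inv.smul continuous_eval

end ContinuousMap

noncomputable def Topology.IsProperMap.liftHomeomorph {X Y Z : Type*} [TopologicalSpace X]
    [LocallyCompactSpace X] [TopologicalSpace Y] [TopologicalSpace Z] {f : C(X, Y)}
    (hf : IsProperMap f) (hsurj : Surjective f) :
    {g : C(X, Z) // FactorsThrough g f} ≃ₜ C(Y, Z) where
  toEquiv := (hf.isClosedMap.isQuotientMap f.continuous hsurj).liftEquiv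
  continuous_toFun := by
    refine ContinuousMap.continuous_of_continuous_uncurry _ ?_
    have hq : IsQuotientMap (Prod.map id ⇑f :
        {g : C(X, Z) // FactorsThrough g f} × X → {g : C(X, Z) // FactorsThrough g f} × Y) :=
      (isProperMap_id.prodMap hf).isClosedMap.isQuotientMap
        (continuous_id.prodMap f.continuous) (surjective_id.prodMap hsurj)
    -- `id × f` is proper, hence a quotient map, along which the uncurried lift becomes evaluation.
    rw [hq.continuous_iff]
    refine (continuous_eval.comp (continuous_subtype_val.prodMap continuous_id)).congr
      fun ⟨g, x⟩ ↦ ?_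
    exact g.2 (surjInv_eq hsurj (f x)).symm
  continuous_invFun := (ContinuousMap.continuous_precomp f).subtype_mk _

namespace unitInterval

noncomputable def toAddCircle : C(unitInterval, AddCircle (1 : ℝ)) :=
  ⟨fun t ↦ (t : ℝ), (AddCircle.continuous_mk' 1).comp continuous_subtype_val⟩

@[simp]
lemma toAddCircle_apply (t : unitInterval) : toAddCircle t = ((t : ℝ) : AddCircle (1 : ℝ)) := rfl

lemma toAddCircle_surjective : Surjective toAddCircle := fun x ↦ by
  obtain ⟨b, hb, rfl⟩ := AddCircle.eq_coe_Ico x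
  exact ⟨⟨b, hb.1, hb.2.le⟩, rfl⟩

lemma factorsThrough_toAddCircle_iff {Z : Type*} (f : unitInterval → Z) :
    FactorsThrough f toAddCircle ↔ f 0 = f 1 := by
  have h01 : toAddCircle 0 = toAddCircle 1 := by simp [AddCircle.coe_period]
  refine ⟨fun h ↦ h h01, fun h s t hst ↦ ?_⟩
  -- `toAddCircle` is injective on `[0, 1)`, and `1` can be replaced by `0`.
  have toIco : ∀ t : unitInterval, ∃ u : unitInterval, (u : ℝ) < 1 ∧ f t = f u ∧
      toAddCircle t = toAddCircle u := fun t ↦ by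
    rcases t.2.2.lt_or_eq with ht | ht
    · exact ⟨t, ht, rfl, rfl⟩
    · obtain rfl : t = 1 := Subtype.ext ht
      exact ⟨0, by simp, h.symm, h01.symm⟩
  obtain ⟨s', hs', hfs, hs⟩ := toIco s
  obtain ⟨t', ht', hft, ht⟩ := toIco t
  rw [hs, ht, toAddCircle_apply, toAddCircle_apply, AddCircle.coe_eq_coe_iff_of_mem_Ico (a := 0)
    ⟨s'.2.1, by simpa using hs'⟩ ⟨t'.2.1, by simpa using ht'⟩] at hst
  rw [hfs, hft, Subtype.ext hst]

end unitInterval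

noncomputable def PSp.twistHomeomorph {𝒢 : Type} (M : Type) [Group 𝒢] [TopologicalSpace 𝒢]
    [ContinuousInv 𝒢] [TopologicalSpace M] [MulAction 𝒢 M] [ContinuousSMul 𝒢 M] {a b : 𝒢}
    (γ : Path a b) (h : 𝒢) :
    PSp 𝒢 M h ≃ₜ PSp 𝒢 M (b * h * a⁻¹) :=
  (ContinuousMap.pointwiseSMulHomeomorph γ.toContinuousMap).subtype fun σ ↦ by
    simp [ContinuousMap.pointwiseSMulHomeomorph, mul_smul]

noncomputable def PSp.homeomorphFreeLoops (𝒢 M : Type) [Monoid 𝒢] [TopologicalSpace 𝒢]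
    [TopologicalSpace M] [MulAction 𝒢 M] : PSp 𝒢 M 1 ≃ₜ C(Circle, M) :=
  ((Homeomorph.refl _).subtype fun σ ↦ by
      rw [one_smul, eq_comm, ← unitInterval.factorsThrough_toAddCircle_iff]; rfl).trans <|
    (unitInterval.toAddCircle.continuous.isProperMap.liftHomeomorph
      unitInterval.toAddCircle_surjective).trans <|
    (AddCircle.homeomorphCircle one_ne_zero).arrowCongr (.refl M)

/-- Proposition 3.1, after Lupercio–Uribe–Xicoténcatl.
Let `M` be a topological space and `𝒢` a topological group acting continuously on `M`.
If `g ∈ 𝒢` lies in the same path component of `𝒢` as the identity `e = 1`, then `P_g M`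
is homotopy equivalent to `P_e M`, and hence to the free loop space
`LM = Map(S¹, M)` of `M`. -/
theorem stmt0 (M : Type) [TopologicalSpace M] (𝒢 : Type) [Group 𝒢] [TopologicalSpace 𝒢]
    [IsTopologicalGroup 𝒢] [MulAction 𝒢 M] [ContinuousSMul 𝒢 M]
    (g : 𝒢) (hg : Joined (1 : 𝒢) g) :
    Nonempty (ContinuousMap.HomotopyEquiv (PSp 𝒢 M g) (PSp 𝒢 M 1)) ∧
    Nonempty (ContinuousMap.HomotopyEquiv (PSp 𝒢 M g) C(Circle, M)) := by
  obtain ⟨e⟩ : Nonempty (PSp 𝒢 M g ≃ₜ PSp 𝒢 M 1) := by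
    have e := Nonempty.intro (PSp.twistHomeomorph M hg.somePath 1).symm
    rwa [mul_one, inv_one, mul_one] at e
  exact ⟨⟨e.toHomotopyEquiv⟩, ⟨(e.trans (PSp.homeomorphFreeLoops 𝒢 M)).toHomotopyEquiv⟩⟩
end

section
/- Let 𝒢 be a path-connected topological group acting continuously on a topological space M, G a finite subgroup of 𝒢, and k a field, and assume the action Φ is trivial over k. Fix for each g ∈ G a path θ_g in 𝒢 from e to g, giving the maps τ_g : P_g M → P_e M. For g, h ∈ G, let P_g M ×_M P_h M = {(σ₁, σ₂) ∈ P_g M × P_h M : σ₂(0) = σ₁(1)}, let γ : P_g M ×_M P_h M → P_{hg} M be the concatenation map γ(σ₁, σ₂)(t) = σ₁(2t) for 0 ≤ t ≤ 1/2 and σ₂(2t−1) for 1/2 ≤ t ≤ 1, let P_e M ×_M P_e M = {(l₁, l₂) ∈ P_e M × P_e M : l₂(0) = l₁(1/2)}, let γ' : P_e M ×_M P_e M → P_e M be defined by γ'(l₁, l₂)(t) = l₁(2t) for 0 ≤ t ≤ 1/4, l₂(2t − 1/2) for 1/4 ≤ t ≤ 3/4, and l₁(2t − 1) for 3/4 ≤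 t ≤ 1, and let τ_{1/2} : P_g M ×_M P_h M → P_e M ×_M P_e M be the map (σ₁, σ₂) ↦ (τ_g σ₁, τ_h σ₂). Then (τ_{hg})_* ∘ γ_* = (γ')_* ∘ (τ_{1/2})_* as maps H_*(P_g M ×_M P_h M; k) → H_*(P_e M; k) on singular homology with coefficients in k. (Lemma 4.2.) -/
open CategoryTheory

/-- The singular homology functor `H_n(−; k)`. -/
noncomputable def singularHomologyFunctor (k : Type) [CommRing k] (n : ℕ) :
    TopCat ⥤ ModuleCat k :=
  TopCat.toSSet ⋙ ((SimplicialObject.whiskering _ _).obj (ModuleCat.free k)) ⋙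
    AlgebraicTopology.alternatingFaceMapComplex (ModuleCat k) ⋙
    HomologicalComplex.homologyFunctor (ModuleCat k) (ComplexShape.down ℕ) n

/-- `H_n(X; k)`, singular homology of a topological space with coefficients in `k`. -/
noncomputable abbrev SH (k : Type) [CommRing k] (n : ℕ) (X : Type) [TopologicalSpace X] :
    ModuleCat k :=
  (singularHomologyFunctor k n).obj (TopCat.of X)

/-- The map induced on singular homology by a continuous map. -/
noncomputable def SHmap (k : Type) [CommRing k] (n : ℕ) {X Y : Type} [TopologicalSpace X]
    [TopologicalSpace Y] (f : C(X, Y)) : SH k n X ⟶ SH k n Y :=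
  (singularHomologyFunctor k n).map (TopCat.ofHom f)

/-- the projection `ℝ → [0,1]`, used to express reparametrizations like `t ↦ 2t`. -/
noncomputable abbrev pr : ℝ → unitInterval := Set.projIcc 0 1 zero_le_one

/-- The action `Φ` is trivial over `k`. -/
def PhiTrivial (𝒢 : Type) [Group 𝒢] [TopologicalSpace 𝒢] (M : Type) [TopologicalSpace M]
    [MulAction 𝒢 M] (k : Type) [Field k] : Prop :=
  ∀ a : C(unitInterval, 𝒢), a 0 = 1 → a 1 = 1 →
    ∀ F : C(PSp 𝒢 M 1, PSp 𝒢 M 1),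
      (∀ (σ : PSp 𝒢 M 1) (t : unitInterval), (F σ).1 t = a t • σ.1 t) →
      ∀ n : ℕ, SHmap k n F = 𝟙 (SH k n (PSp 𝒢 M 1))

/-- `τ` is the map `τ_g : P_g M → P_e M` associated to the path `θ` from `e` to `g`. -/
def IsTau {𝒢 : Type} [Group 𝒢] [TopologicalSpace 𝒢] {M : Type} [TopologicalSpace M]
    [MulAction 𝒢 M] {g : 𝒢} (θ : C(unitInterval, 𝒢)) (τ : C(PSp 𝒢 M g, PSp 𝒢 M 1)) : Prop :=
  ∀ (σ : PSp 𝒢 M g) (t : unitInterval),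
    ((t : ℝ) ≤ 1/2 → (τ σ).1 t = σ.1 (pr (2 * (t : ℝ)))) ∧
    (1/2 ≤ (t : ℝ) → (τ σ).1 t = (θ (pr (2 * (t : ℝ) - 1)))⁻¹ • σ.1 1)

/-- The fiber product `P_g M ×_M P_h M = {(σ₁, σ₂) : σ₂(0) = σ₁(1)}`. -/
abbrev PFib (𝒢 : Type) [Monoid 𝒢] [TopologicalSpace 𝒢] (M : Type) [TopologicalSpace M]
    [MulAction 𝒢 M] (g h : 𝒢) : Type :=
  {p : PSp 𝒢 M g × PSp 𝒢 M h // p.2.1 0 = p.1.1 1}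

/-- The fiber product `P_e M ×_M P_e M = {(l₁, l₂) : l₂(0) = l₁(1/2)}`. -/
noncomputable abbrev PFibHalf (𝒢 : Type) [Monoid 𝒢] [TopologicalSpace 𝒢] (M : Type)
    [TopologicalSpace M] [MulAction 𝒢 M] : Type :=
  {p : PSp 𝒢 M 1 × PSp 𝒢 M 1 // p.2.1 0 = p.1.1 (pr (1/2))}

/-!
Both composites send `(σ₁, σ₂)` to loops that agree up to the pointwise action of one loop
`a` in `𝒢`: on `[0, 1/2]` they trace the same path, while on `[1/2, 1]` both return along
`θ`-translates of the endpoint `σ₂(1)`, and `a` converts one translate into the other. Hence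
`γ' ∘ τ_{1/2} = Φ_a ∘ τ_{hg} ∘ γ`, and `Φ_a` acts trivially on homology.
-/

lemma SHmap_comp (k : Type) [CommRing k] (n : ℕ) {X Y Z : Type} [TopologicalSpace X]
    [TopologicalSpace Y] [TopologicalSpace Z] (f : C(X, Y)) (f' : C(Y, Z)) :
    SHmap k n (f'.comp f) = SHmap k n f ≫ SHmap k n f' :=
  (singularHomologyFunctor k n).map_comp (TopCat.ofHom f) (TopCat.ofHom f')

lemma coe_pr {x : ℝ} (h0 : 0 ≤ x) (h1 : x ≤ 1) : (pr x : ℝ) = x :=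
  congrArg Subtype.val (Set.projIcc_of_mem _ ⟨h0, h1⟩)

lemma pr_of_nonpos {x : ℝ} (h : x ≤ 0) : pr x = 0 :=
  Set.projIcc_of_le_left _ h

lemma pr_of_one_le {x : ℝ} (h : 1 ≤ x) : pr x = 1 :=
  Set.projIcc_of_right_le _ h

section LoopAction

variable {𝒢 M : Type} [Group 𝒢] [TopologicalSpace 𝒢] [TopologicalSpace M] [MulAction 𝒢 M]
  [ContinuousSMul 𝒢 M]

/-- The map `Φ_a`. -/
noncomputable def loopSMul (a : C(unitInterval, 𝒢)) (ha : a 0 = a 1) :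
    C(PSp 𝒢 M 1, PSp 𝒢 M 1) where
  toFun σ := ⟨⟨fun t => a t • σ.1 t, by fun_prop⟩, by simp [σ.2, ha]⟩
  continuous_toFun := by
    let act : C(C(unitInterval, M) × unitInterval, M) :=
      ⟨fun q => a q.2 • q.1 q.2, by fun_prop⟩
    exact (act.curry.continuous.comp continuous_subtype_val).subtype_mk _

lemma PhiTrivial.SHmap_eq_of_smul {k : Type} [Field k] (htriv : PhiTrivial 𝒢 M k)
    {a : C(unitInterval, 𝒢)} (ha0 : a 0 = 1) (ha1 : a 1 = 1) {X : Type} [TopologicalSpace X]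
    (f f' : C(X, PSp 𝒢 M 1)) (hff' : ∀ x t, (f' x).1 t = a t • (f x).1 t) (n : ℕ) :
    SHmap k n f = SHmap k n f' := by
  have hf' : f' = (loopSMul a (ha0.trans ha1.symm)).comp f := by
    ext x t
    exact hff' x t
  rw [hf', SHmap_comp, htriv a ha0 ha1 _ (fun _ _ => rfl), Category.comp_id]

end LoopAction

section Correction

variable {𝒢 : Type} [Group 𝒢] [TopologicalSpace 𝒢] [IsTopologicalGroup 𝒢]
  (θg θh θhg : C(unitInterval, 𝒢))

/-- The loop `a` with `γ' ∘ τ_{1/2} = Φ_a ∘ τ_{hg} ∘ γ`. -/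
noncomputable def concatCorrection : C(unitInterval, 𝒢) where
  toFun t := (θg (pr (4 * t - 3)))⁻¹ * (θh (pr (4 * t - 2)))⁻¹ * θhg (pr (2 * t - 1))
  continuous_toFun := by
    have : Continuous pr := continuous_projIcc
    fun_prop

variable {θg θh θhg}

lemma concatCorrection_of_le_half (hθg0 : θg 0 = 1) (hθh0 : θh 0 = 1) (hθhg0 : θhg 0 = 1)
    {t : unitInterval} (ht : (t : ℝ) ≤ 1/2) : concatCorrection θg θh θhg t = 1 := by
  simp only [concatCorrection, ContinuousMap.coe_mk]
  rw [pr_of_nonpos (by linarith), pr_of_nonpos (by linarith), pr_of_nonpos (by linarith),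
    hθg0, hθh0, hθhg0]
  group

lemma concatCorrection_of_le_three_quarters (hθg0 : θg 0 = 1) {t : unitInterval}
    (ht : (t : ℝ) ≤ 3/4) :
    concatCorrection θg θh θhg t = (θh (pr (4 * t - 2)))⁻¹ * θhg (pr (2 * t - 1)) := by
  simp only [concatCorrection, ContinuousMap.coe_mk]
  rw [pr_of_nonpos (by linarith), hθg0, inv_one, one_mul]

lemma concatCorrection_of_three_quarters_le {h : 𝒢} (hθh1 : θh 1 = h) {t : unitInterval}
    (ht : 3/4 ≤ (t : ℝ)) :
    concatCorrection θg θh θhg t = (θg (pr (4 * t - 3)))⁻¹ * h⁻¹ * θhg (pr (2 * t - 1)) := by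
  simp only [concatCorrection, ContinuousMap.coe_mk]
  rw [pr_of_one_le (x := 4 * t - 2) (by linarith), hθh1]

lemma concatCorrection_zero (hθg0 : θg 0 = 1) (hθh0 : θh 0 = 1) (hθhg0 : θhg 0 = 1) :
    concatCorrection θg θh θhg 0 = 1 :=
  concatCorrection_of_le_half hθg0 hθh0 hθhg0 (by norm_num)

lemma concatCorrection_one {g h : 𝒢} (hθg1 : θg 1 = g) (hθh1 : θh 1 = h)
    (hθhg1 : θhg 1 = h * g) : concatCorrection θg θh θhg 1 = 1 := by
  rw [concatCorrection_of_three_quarters_le hθh1 (by norm_num), Set.Icc.coe_one,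
    pr_of_one_le (by norm_num), pr_of_one_le (by norm_num), hθg1, hθhg1]
  group

end Correction

lemma concatCorrection_smul_tau_concat {M 𝒢 : Type} [TopologicalSpace M] [Group 𝒢]
    [TopologicalSpace 𝒢] [IsTopologicalGroup 𝒢] [MulAction 𝒢 M] {g h : 𝒢}
    {θg θh θhg : C(unitInterval, 𝒢)} (hθg0 : θg 0 = 1) (hθh0 : θh 0 = 1) (hθh1 : θh 1 = h)
    (hθhg0 : θhg 0 = 1)
    {τg : C(PSp 𝒢 M g, PSp 𝒢 M 1)} (hτg : IsTau θg τg)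
    {τh : C(PSp 𝒢 M h, PSp 𝒢 M 1)} (hτh : IsTau θh τh)
    {τhg : C(PSp 𝒢 M (h * g), PSp 𝒢 M 1)} (hτhg : IsTau θhg τhg)
    {γ : C(PFib 𝒢 M g h, PSp 𝒢 M (h * g))}
    (hγ : ∀ (p : PFib 𝒢 M g h) (t : unitInterval),
      ((t : ℝ) ≤ 1/2 → (γ p).1 t = p.1.1.1 (pr (2 * (t : ℝ)))) ∧
      (1/2 ≤ (t : ℝ) → (γ p).1 t = p.1.2.1 (pr (2 * (t : ℝ) - 1))))
    {γ' : C(PFibHalf 𝒢 M, PSp 𝒢 M 1)}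
    (hγ' : ∀ (p : PFibHalf 𝒢 M) (t : unitInterval),
      ((t : ℝ) ≤ 1/4 → (γ' p).1 t = p.1.1.1 (pr (2 * (t : ℝ)))) ∧
      (1/4 ≤ (t : ℝ) → (t : ℝ) ≤ 3/4 → (γ' p).1 t = p.1.2.1 (pr (2 * (t : ℝ) - 1/2))) ∧
      (3/4 ≤ (t : ℝ) → (γ' p).1 t = p.1.1.1 (pr (2 * (t : ℝ) - 1))))
    {τhalf : C(PFib 𝒢 M g h, PFibHalf 𝒢 M)}
    (hτhalf : ∀ p : PFib 𝒢 M g h, (τhalf p).1.1 = τg p.1.1 ∧ (τhalf p).1.2 = τh p.1.2)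
    (p : PFib 𝒢 M g h) (t : unitInterval) :
    concatCorrection θg θh θhg t • (τhg (γ p)).1 t = (γ' (τhalf p)).1 t := by
  obtain ⟨ht0, ht1⟩ : 0 ≤ (t : ℝ) ∧ (t : ℝ) ≤ 1 := t.2
  rcases le_total (t : ℝ) (1/2) with hle_half | hhalf_le
  · rw [concatCorrection_of_le_half hθg0 hθh0 hθhg0 hle_half, one_smul, (hτhg _ t).1 hle_half]
    have h2t : (pr (2 * t) : ℝ) = 2 * t := coe_pr (by linarith) (by linarith)
    rcases le_total (t : ℝ) (1/4) with hle_quarter | hquarter_le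
    · rw [(hγ p _).1 (by linarith), (hγ' _ t).1 hle_quarter, (hτhalf p).1,
        (hτg _ _).1 (by linarith)]
    · have h2t' : (pr (2 * t - 1/2) : ℝ) = 2 * t - 1/2 := coe_pr (by linarith) (by linarith)
      rw [(hγ p _).2 (by linarith), (hγ' _ t).2.1 hquarter_le (by linarith), (hτhalf p).2,
        (hτh _ _).1 (by linarith), h2t, h2t']
      ring_nf
  have hγ_one : (γ p).1 1 = p.1.2.1 1 := by
    rw [(hγ p 1).2 (by norm_num), Set.Icc.coe_one, pr_of_one_le (by norm_num)]
  rw [(hτhg _ t).2 hhalf_le, hγ_one]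
  rcases le_total (t : ℝ) (3/4) with hle_three_quarters | hthree_quarters_le
  · have h2t' : (pr (2 * t - 1/2) : ℝ) = 2 * t - 1/2 := coe_pr (by linarith) (by linarith)
    rw [concatCorrection_of_le_three_quarters hθg0 hle_three_quarters,
      (hγ' _ t).2.1 (by linarith) hle_three_quarters, (hτhalf p).2, (hτh _ _).2 (by linarith),
      h2t', mul_smul, smul_inv_smul]
    ring_nf
  · have h2t' : (pr (2 * t - 1) : ℝ) = 2 * t - 1 := coe_pr (by linarith) (by linarith)
    have hσ₁_one : p.1.1.1 1 = h⁻¹ • p.1.2.1 1 := by rw [← p.2, p.1.2.2, inv_smul_smul]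
    rw [concatCorrection_of_three_quarters_le hθh1 hthree_quarters_le,
      (hγ' _ t).2.2 hthree_quarters_le, (hτhalf p).1, (hτg _ _).2 (by linarith), h2t',
      hσ₁_one, mul_smul, smul_inv_smul, mul_smul]
    ring_nf

theorem stmt8_general (M : Type) [TopologicalSpace M] (𝒢 : Type) [Group 𝒢] [TopologicalSpace 𝒢]
    [IsTopologicalGroup 𝒢] [MulAction 𝒢 M] [ContinuousSMul 𝒢 M]
    (k : Type) [Field k]
    (htriv : PhiTrivial 𝒢 M k)
    (g h : 𝒢)
    (θg : C(unitInterval, 𝒢)) (hθg0 : θg 0 = 1) (hθg1 : θg 1 = g)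
    (θh : C(unitInterval, 𝒢)) (hθh0 : θh 0 = 1) (hθh1 : θh 1 = h)
    (θhg : C(unitInterval, 𝒢)) (hθhg0 : θhg 0 = 1) (hθhg1 : θhg 1 = h * g)
    (τg : C(PSp 𝒢 M g, PSp 𝒢 M 1)) (hτg : IsTau θg τg)
    (τh : C(PSp 𝒢 M h, PSp 𝒢 M 1)) (hτh : IsTau θh τh)
    (τhg : C(PSp 𝒢 M (h * g), PSp 𝒢 M 1)) (hτhg : IsTau θhg τhg)
    (γ : C(PFib 𝒢 M g h, PSp 𝒢 M (h * g)))
    (hγ : ∀ (p : PFib 𝒢 M g h) (t : unitInterval),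
      ((t : ℝ) ≤ 1/2 → (γ p).1 t = p.1.1.1 (pr (2 * (t : ℝ)))) ∧
      (1/2 ≤ (t : ℝ) → (γ p).1 t = p.1.2.1 (pr (2 * (t : ℝ) - 1))))
    (γ' : C(PFibHalf 𝒢 M, PSp 𝒢 M 1))
    (hγ' : ∀ (p : PFibHalf 𝒢 M) (t : unitInterval),
      ((t : ℝ) ≤ 1/4 → (γ' p).1 t = p.1.1.1 (pr (2 * (t : ℝ)))) ∧
      (1/4 ≤ (t : ℝ) → (t : ℝ) ≤ 3/4 → (γ' p).1 t = p.1.2.1 (pr (2 * (t : ℝ) - 1/2))) ∧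
      (3/4 ≤ (t : ℝ) → (γ' p).1 t = p.1.1.1 (pr (2 * (t : ℝ) - 1))))
    (τhalf : C(PFib 𝒢 M g h, PFibHalf 𝒢 M))
    (hτhalf : ∀ p : PFib 𝒢 M g h,
      (τhalf p).1.1 = τg p.1.1 ∧ (τhalf p).1.2 = τh p.1.2) :
    ∀ n : ℕ, SHmap k n γ ≫ SHmap k n τhg = SHmap k n τhalf ≫ SHmap k n γ' := by
  intro n
  rw [← SHmap_comp, ← SHmap_comp]
  exact htriv.SHmap_eq_of_smul (concatCorrection_zero hθg0 hθh0 hθhg0)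
    (concatCorrection_one hθg1 hθh1 hθhg1) _ _
    (fun p t => (concatCorrection_smul_tau_concat hθg0 hθh0 hθh1 hθhg0 hτg hτh hτhg hγ hγ'
      hτhalf p t).symm) n

/-- Lemma 4.2.  With `𝒢` path-connected acting continuously on `M`, `G` a
finite subgroup of `𝒢`, `k` a field over which the action `Φ` is trivial, paths `θ_g` from
`e` to each `g ∈ G` giving the maps `τ_g : P_g M → P_e M`; with `γ : P_g M ×_M P_h M → P_{hg} M`
the concatenation, `γ' : P_e M ×_M P_e M → P_e M` the "concatenation at mid-point" map, and
`τ_{1/2} = τ_g × τ_h` the induced map of fiber products, we have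
`(τ_{hg})_* ∘ γ_* = (γ')_* ∘ (τ_{1/2})_*` on singular homology with coefficients in `k`. -/
theorem stmt8 (M : Type) [TopologicalSpace M] (𝒢 : Type) [Group 𝒢] [TopologicalSpace 𝒢]
    [IsTopologicalGroup 𝒢] [PathConnectedSpace 𝒢] [MulAction 𝒢 M] [ContinuousSMul 𝒢 M]
    (G : Subgroup 𝒢) [Finite G] (k : Type) [Field k]
    (htriv : PhiTrivial 𝒢 M k)
    (g h : 𝒢) (hg : g ∈ G) (hh : h ∈ G)
    (θg : C(unitInterval, 𝒢)) (hθg0 : θg 0 = 1) (hθg1 : θg 1 = g)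
    (θh : C(unitInterval, 𝒢)) (hθh0 : θh 0 = 1) (hθh1 : θh 1 = h)
    (θhg : C(unitInterval, 𝒢)) (hθhg0 : θhg 0 = 1) (hθhg1 : θhg 1 = h * g)
    (τg : C(PSp 𝒢 M g, PSp 𝒢 M 1)) (hτg : IsTau θg τg)
    (τh : C(PSp 𝒢 M h, PSp 𝒢 M 1)) (hτh : IsTau θh τh)
    (τhg : C(PSp 𝒢 M (h * g), PSp 𝒢 M 1)) (hτhg : IsTau θhg τhg)
    (γ : C(PFib 𝒢 M g h, PSp 𝒢 M (h * g)))
    (hγ : ∀ (p : PFib 𝒢 M g h) (t : unitInterval),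
      ((t : ℝ) ≤ 1/2 → (γ p).1 t = p.1.1.1 (pr (2 * (t : ℝ)))) ∧
      (1/2 ≤ (t : ℝ) → (γ p).1 t = p.1.2.1 (pr (2 * (t : ℝ) - 1))))
    (γ' : C(PFibHalf 𝒢 M, PSp 𝒢 M 1))
    (hγ' : ∀ (p : PFibHalf 𝒢 M) (t : unitInterval),
      ((t : ℝ) ≤ 1/4 → (γ' p).1 t = p.1.1.1 (pr (2 * (t : ℝ)))) ∧
      (1/4 ≤ (t : ℝ) → (t : ℝ) ≤ 3/4 → (γ' p).1 t = p.1.2.1 (pr (2 * (t : ℝ) - 1/2))) ∧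
      (3/4 ≤ (t : ℝ) → (γ' p).1 t = p.1.1.1 (pr (2 * (t : ℝ) - 1))))
    (τhalf : C(PFib 𝒢 M g h, PFibHalf 𝒢 M))
    (hτhalf : ∀ p : PFib 𝒢 M g h,
      (τhalf p).1.1 = τg p.1.1 ∧ (τhalf p).1.2 = τh p.1.2) :
    ∀ n : ℕ, SHmap k n γ ≫ SHmap k n τhg = SHmap k n τhalf ≫ SHmap k n γ' :=
  stmt8_general M 𝒢 k htriv g h θg hθg0 hθg1 θh hθh0 hθh1 θhg hθhg0 hθhg1 τg hτg τh hτh τhg hτhg γ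
    hγ γ' hγ' τhalf hτhalf
end
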